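/- arXiv:2005.03554 — 4 statements merged into one kernel-verified Lean document; each statement's English description precedes it below -/
import Mathlib

section
/- For every real p₁ > 1, p₂ > 0, and every constant A > 0, the function χ(x) = (1 + A(1 - ((p₁-1)/p₁)x))^{p₁} · (1 - A(((1+p₂)/p₂)x - 1))^{p₂}, defined on the interval where the second factor is nonnegative, is strictly decreasing in x on (0, min{1, p₂(1+A)/((1+p₂)A)}), satisfies χ(0) = (1+A)^{p₁+p₂} > 1, and there exists a unique x̂ ∈ (0,1) with χ(x̂) = 1. -/
/-!
Write χ = F^{p₁} G^{p₂} with F, G affine and decreasing. G vanishes exactly at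
x₀ = p₂(1+A)/((1+p₂)A), and F > G > 0 on (0, x₀), so χ is strictly decreasing there, from
χ(0) = (1+A)^{p₁+p₂} > 1. At the right end of (0, min 1 x₀) either G = 0, or x = 1, where
p₁(F - 1) + p₂(G - 1) = A - A = 0 and log t < t - 1 give log χ(1) < 0. The intermediate
value theorem gives the root, and strict monotonicity (with χ = 0 where G = 0) its uniqueness.
-/

open Set

/-- The FRM boundary-determining function χ. -/
noncomputable def frmChi (p₁ p₂ A x : ℝ) : ℝ :=
  (1 + A * (1 - (p₁ - 1) / p₁ * x)) ^ p₁ * (1 - A * ((1 + p₂) / p₂ * x - 1)) ^ p₂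

noncomputable def frmFactor₁ (p₁ A x : ℝ) : ℝ := 1 + A * (1 - (p₁ - 1) / p₁ * x)

noncomputable def frmFactor₂ (p₂ A x : ℝ) : ℝ := 1 - A * ((1 + p₂) / p₂ * x - 1)

noncomputable def frmBoundary (p₂ A : ℝ) : ℝ := p₂ * (1 + A) / ((1 + p₂) * A)

lemma Real.rpow_mul_rpow_lt_one {p q u v : ℝ} (hp : 0 < p) (hq : 0 < q) (hu : 0 < u)
    (hv : 0 < v) (hu1 : u ≠ 1) (h : p * (u - 1) + q * (v - 1) = 0) : u ^ p * v ^ q < 1 := by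
  have hlog : p * Real.log u + q * Real.log v < 0 := by
    have hlu := mul_lt_mul_of_pos_left (Real.log_lt_sub_one_of_pos hu hu1) hp
    have hlv := mul_le_mul_of_nonneg_left (Real.log_le_sub_one_of_pos hv) hq.le
    linarith
  have hpos : 0 < u ^ p * v ^ q := by positivity
  rwa [← Real.log_neg_iff hpos, Real.log_mul (by positivity) (by positivity), Real.log_rpow hu,
    Real.log_rpow hv]

section

variable {p₁ p₂ A : ℝ}

lemma frmChi_eq (x : ℝ) : frmChi p₁ p₂ A x = frmFactor₁ p₁ A x ^ p₁ * frmFactor₂ p₂ A x ^ p₂ :=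
  rfl

lemma frmFactor₂_eq (hp₂ : 0 < p₂) (hA : 0 < A) (x : ℝ) :
    frmFactor₂ p₂ A x = (1 + p₂) * A / p₂ * (frmBoundary p₂ A - x) := by
  unfold frmFactor₂ frmBoundary
  field_simp
  ring

lemma frmFactor₂_pos_iff (hp₂ : 0 < p₂) (hA : 0 < A) {x : ℝ} :
    0 < frmFactor₂ p₂ A x ↔ x < frmBoundary p₂ A := by
  rw [frmFactor₂_eq hp₂ hA, mul_pos_iff_of_pos_left (by positivity), sub_pos]

lemma frmFactor₂_strictAnti (hp₂ : 0 < p₂) (hA : 0 < A) : StrictAnti (frmFactor₂ p₂ A) := by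
  intro x y hxy
  simp only [frmFactor₂_eq hp₂ hA]
  gcongr

lemma frmFactor₁_antitone (hp₁ : 1 ≤ p₁) (hA : 0 ≤ A) : Antitone (frmFactor₁ p₁ A) := by
  intro x y hxy
  have ha : 0 ≤ (p₁ - 1) / p₁ := div_nonneg (by linarith) (by linarith)
  unfold frmFactor₁
  gcongr

lemma frmFactor₂_lt_frmFactor₁ (hp₁ : 0 < p₁) (hp₂ : 0 < p₂) (hA : 0 < A) {x : ℝ} (hx : 0 < x) :
    frmFactor₂ p₂ A x < frmFactor₁ p₁ A x := by
  have hab : (p₁ - 1) / p₁ < (1 + p₂) / p₂ := by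
    rw [sub_div, div_self hp₁.ne', add_div, div_self hp₂.ne']
    linarith [one_div_pos.2 hp₁, one_div_pos.2 hp₂]
  unfold frmFactor₁ frmFactor₂
  nlinarith [mul_pos (mul_pos hA (sub_pos.2 hab)) hx]

lemma frmChi_zero (hA : 0 < 1 + A) : frmChi p₁ p₂ A 0 = (1 + A) ^ (p₁ + p₂) := by
  simp [frmChi, Real.rpow_add hA]

lemma frmChi_frmBoundary (hp₂ : 0 < p₂) (hA : 0 < A) : frmChi p₁ p₂ A (frmBoundary p₂ A) = 0 := by
  simp [frmChi_eq, frmFactor₂_eq hp₂ hA, Real.zero_rpow hp₂.ne']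

lemma frmChi_one_lt_one (hp₁ : 0 < p₁) (hp₂ : 0 < p₂) (hA : 0 < A)
    (h1 : 1 < frmBoundary p₂ A) : frmChi p₁ p₂ A 1 < 1 := by
  have hG : 0 < frmFactor₂ p₂ A 1 := (frmFactor₂_pos_iff hp₂ hA).2 h1
  have hF : 0 < frmFactor₁ p₁ A 1 := hG.trans (frmFactor₂_lt_frmFactor₁ hp₁ hp₂ hA one_pos)
  have hF_eq : frmFactor₁ p₁ A 1 = 1 + A / p₁ := by
    unfold frmFactor₁
    field_simp
    ring
  have hF_ne : frmFactor₁ p₁ A 1 ≠ 1 := by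
    rw [hF_eq]
    exact (lt_add_of_pos_right 1 (div_pos hA hp₁)).ne'
  have hbalance : p₁ * (frmFactor₁ p₁ A 1 - 1) + p₂ * (frmFactor₂ p₂ A 1 - 1) = 0 := by
    unfold frmFactor₁ frmFactor₂
    field_simp
    ring
  exact Real.rpow_mul_rpow_lt_one hp₁ hp₂ hF hG hF_ne hbalance

lemma frmChi_strictAntiOn (hp₁ : 1 ≤ p₁) (hp₂ : 0 < p₂) (hA : 0 < A) :
    StrictAntiOn (frmChi p₁ p₂ A) (Ioo 0 (frmBoundary p₂ A)) := by
  intro x hx y hy hxy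
  have hGy : 0 < frmFactor₂ p₂ A y := (frmFactor₂_pos_iff hp₂ hA).2 hy.2
  have hFy : 0 < frmFactor₁ p₁ A y :=
    hGy.trans (frmFactor₂_lt_frmFactor₁ (by linarith) hp₂ hA hy.1)
  have hFyx := frmFactor₁_antitone hp₁ hA.le hxy.le
  exact mul_lt_mul' (Real.rpow_le_rpow hFy.le hFyx (by linarith))
    (Real.rpow_lt_rpow hGy.le (frmFactor₂_strictAnti hp₂ hA hxy) hp₂) (by positivity)
    (Real.rpow_pos_of_pos (hFy.trans_le hFyx) _)

lemma continuous_frmChi (hp₁ : 0 ≤ p₁) (hp₂ : 0 ≤ p₂) : Continuous (frmChi p₁ p₂ A) := by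
  unfold frmChi
  fun_prop (disch := exact Or.inr ‹_›)

end

/-- χ is strictly decreasing on (0, min{1, p₂(1+A)/((1+p₂)A)}),
χ(0) = (1+A)^(p₁+p₂) > 1, and there is a unique x̂ ∈ (0,1) (within the domain where
the second factor is nonnegative) with χ(x̂) = 1. -/
theorem stmt_2 (p₁ p₂ A : ℝ) (hp₁ : 1 < p₁) (hp₂ : 0 < p₂) (hA : 0 < A) :
    StrictAntiOn (frmChi p₁ p₂ A) (Ioo 0 (min 1 (p₂ * (1 + A) / ((1 + p₂) * A)))) ∧
    frmChi p₁ p₂ A 0 = (1 + A) ^ (p₁ + p₂) ∧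
    1 < (1 + A) ^ (p₁ + p₂) ∧
    ∃! x : ℝ, x ∈ Ioo (0 : ℝ) 1 ∧ 0 ≤ 1 - A * ((1 + p₂) / p₂ * x - 1) ∧
      frmChi p₁ p₂ A x = 1 := by
  set x₀ := frmBoundary p₂ A
  have hx₀ : 0 < x₀ := by
    simp only [x₀, frmBoundary]
    positivity
  have hanti : StrictAntiOn (frmChi p₁ p₂ A) (Ioo 0 (min 1 x₀)) :=
    (frmChi_strictAntiOn hp₁.le hp₂ hA).mono (Ioo_subset_Ioo_right (min_le_right _ _))
  have hχ₀ := frmChi_zero (p₁ := p₁) (p₂ := p₂) (by linarith : 0 < 1 + A)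
  have hone_lt : 1 < (1 + A) ^ (p₁ + p₂) := Real.one_lt_rpow (by linarith) (by linarith)
  have hend : frmChi p₁ p₂ A (min 1 x₀) < 1 := by
    rcases le_or_gt x₀ 1 with h | h
    · rw [min_eq_right h, frmChi_frmBoundary hp₂ hA]
      exact one_pos
    · rw [min_eq_left h.le]
      exact frmChi_one_lt_one (by linarith) hp₂ hA h
  obtain ⟨x, hx, hχx⟩ := intermediate_value_Ioo' (lt_min one_pos hx₀).le
    (continuous_frmChi (by linarith) hp₂.le).continuousOn ⟨hend, hχ₀ ▸ hone_lt⟩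
  refine ⟨hanti, hχ₀, hone_lt, x, ⟨⟨hx.1, hx.2.trans_le (min_le_left _ _)⟩,
    ((frmFactor₂_pos_iff hp₂ hA).2 (hx.2.trans_le (min_le_right _ _))).le, hχx⟩, ?_⟩
  rintro y ⟨hy, hGy, hχy⟩
  have hyx₀ : y < x₀ := by
    refine (frmFactor₂_pos_iff hp₂ hA).1 (hGy.lt_of_ne fun hG => ?_)
    rw [frmChi, ← hG, Real.zero_rpow hp₂.ne', mul_zero] at hχy
    exact zero_ne_one hχy
  exact hanti.injOn ⟨hy.1, lt_min hy.2 hyx₀⟩ hx (hχy.trans hχx.symm)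
end

section
/- Let p₂ > 0, B₀ > 0, 0 < r < m, and β > B₀(m/r - 1). Define g̃(υ) = (1+p₂)·𝔲^{1/(1+p₂)}·υ^{p₂/(1+p₂)} - (1 + p₂υ) for υ ∈ (0,1), where 𝔲 = β/(B₀(m/r-1)) > 1. Then g̃ is strictly increasing on (0,1), g̃(υ) → -1 < 0 as υ → 0⁺, and g̃(1) > 0; consequently there exists a unique υ* ∈ (0,1) with g̃(υ*) = 0. -/
/-!
With `a = 1/(1+p)` and `b = p/(1+p)`, so that `a + b = 1`, the derivative of
`g̃(υ) = (1+p) 𝔲^a υ^b - (1 + p υ)` is `p ((𝔲/υ)^a - 1)`, positive for `0 < υ < 𝔲`.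
Hence `g̃` increases strictly on `[0, 𝔲] ⊇ [0, 1]`, from `g̃(0) = -1` to
`g̃(1) = (1+p)(𝔲^a - 1) > 0`, and the intermediate value theorem gives the unique zero.
-/

open Set Filter Topology

theorem existsUnique_mem_Ioo_eq_of_strictMonoOn {α δ : Type*} [ConditionallyCompleteLinearOrder α]
    [TopologicalSpace α] [OrderTopology α] [DenselyOrdered α] [LinearOrder δ]
    [TopologicalSpace δ] [OrderClosedTopology δ] {f : α → δ} {a b : α} {c : δ} (hab : a ≤ b)
    (hf : ContinuousOn f (Icc a b)) (hmono : StrictMonoOn f (Ioo a b)) (ha : f a < c)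
    (hb : c < f b) : ∃! x, x ∈ Ioo a b ∧ f x = c := by
  obtain ⟨x, hx, hfx⟩ := intermediate_value_Ioo hab hf ⟨ha, hb⟩
  exact ⟨x, ⟨hx, hfx⟩, fun y ⟨hy, hfy⟩ => hmono.injOn hy hx (hfy.trans hfx.symm)⟩

/-- The paper's `g̃` with `p = p₂`, as a function of `υ = α / (p₂ B₀ (m/r - 1))`, where
`u = 𝔲 = β / (B₀ (m/r - 1))`. -/
noncomputable def gTilde (p u υ : ℝ) : ℝ :=
  (1 + p) * u ^ (1 / (1 + p)) * υ ^ (p / (1 + p)) - (1 + p * υ)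

namespace gTilde

variable {p u : ℝ}

theorem apply_zero (hp : 0 < p) : gTilde p u 0 = -1 := by
  simp [gTilde, Real.zero_rpow (by positivity : p / (1 + p) ≠ 0)]

theorem apply_one (p u : ℝ) : gTilde p u 1 = (1 + p) * (u ^ (1 / (1 + p)) - 1) := by
  simp only [gTilde, Real.one_rpow]
  ring

theorem apply_one_pos (hp : 0 < p) (hu : 1 < u) : 0 < gTilde p u 1 := by
  rw [apply_one]
  have : 1 < u ^ (1 / (1 + p)) := Real.one_lt_rpow hu (by positivity)
  nlinarith

theorem continuous (hp : 0 ≤ p) : Continuous (gTilde p u) := by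
  have hb : 0 ≤ p / (1 + p) := by positivity
  unfold gTilde
  fun_prop (disch := exact hb)

theorem hasDerivAt (hp : 1 + p ≠ 0) (hu : 0 ≤ u) {x : ℝ} (hx : 0 < x) :
    HasDerivAt (gTilde p u) (p * ((u / x) ^ (1 / (1 + p)) - 1)) x := by
  have hpow := Real.hasDerivAt_rpow_const (p := p / (1 + p)) (Or.inl hx.ne')
  refine ((hpow.const_mul ((1 + p) * u ^ (1 / (1 + p)))).sub
    (((hasDerivAt_id' x).const_mul p).const_add 1)).congr_deriv ?_
  have hexp : p / (1 + p) - 1 = -(1 / (1 + p)) := by field_simp; ring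
  rw [hexp, Real.rpow_neg hx.le, Real.div_rpow hu hx.le]
  field_simp

theorem strictMonoOn_Icc (hp : 0 < p) : StrictMonoOn (gTilde p u) (Icc 0 u) := by
  refine strictMonoOn_of_deriv_pos (convex_Icc 0 u) (continuous hp.le).continuousOn ?_
  rw [interior_Icc]
  rintro x ⟨hx0, hxu⟩
  rw [(hasDerivAt (by linarith) (hx0.trans hxu).le hx0).deriv]
  have : 1 < (u / x) ^ (1 / (1 + p)) :=
    Real.one_lt_rpow ((one_lt_div hx0).2 hxu) (by positivity)
  nlinarith

theorem strictMonoOn_Ioo_zero_one (hp : 0 < p) (hu : 1 ≤ u) :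
    StrictMonoOn (gTilde p u) (Ioo 0 1) :=
  (strictMonoOn_Icc hp).mono (Ioo_subset_Icc_self.trans (Icc_subset_Icc_right hu))

theorem tendsto_nhdsGT_zero (hp : 0 < p) : Tendsto (gTilde p u) (𝓝[>] 0) (𝓝 (-1)) :=
  apply_zero (u := u) hp ▸ ((continuous hp.le).tendsto 0).mono_left nhdsWithin_le_nhds

theorem existsUnique_mem_Ioo_eq_zero (hp : 0 < p) (hu : 1 < u) :
    ∃! υ, υ ∈ Ioo 0 1 ∧ gTilde p u υ = 0 :=
  existsUnique_mem_Ioo_eq_of_strictMonoOn zero_le_one (continuous hp.le).continuousOn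
    (strictMonoOn_Ioo_zero_one hp hu.le)
    (by rw [apply_zero hp]; norm_num) (apply_one_pos hp hu)

end gTilde

/-- With 𝔲 = β/(B₀(m/r-1)) > 1, the function
g̃(υ) = (1+p₂)𝔲^{1/(1+p₂)}υ^{p₂/(1+p₂)} - (1 + p₂υ) is strictly increasing on (0,1),
tends to -1 as υ → 0⁺, is positive at 1, and has a unique zero υ* ∈ (0,1). -/
theorem stmt_7 (p₂ B₀ r m β : ℝ) (hp₂ : 0 < p₂) (hB₀ : 0 < B₀) (hr : 0 < r)
    (hm : r < m) (hβ : B₀ * (m / r - 1) < β) :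
    let 𝔲 : ℝ := β / (B₀ * (m / r - 1))
    let g : ℝ → ℝ := fun υ =>
      (1 + p₂) * 𝔲 ^ (1 / (1 + p₂)) * υ ^ (p₂ / (1 + p₂)) - (1 + p₂ * υ)
    1 < 𝔲 ∧
    StrictMonoOn g (Ioo 0 1) ∧
    Tendsto g (nhdsWithin 0 (Ioi 0)) (nhds (-1)) ∧
    (-1 : ℝ) < 0 ∧
    0 < g 1 ∧
    ∃! υ : ℝ, υ ∈ Ioo (0 : ℝ) 1 ∧ g υ = 0 := by
  intro 𝔲 g
  have hden : 0 < B₀ * (m / r - 1) := mul_pos hB₀ (sub_pos.2 ((one_lt_div hr).2 hm))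
  have h𝔲 : 1 < 𝔲 := (one_lt_div hden).2 hβ
  exact ⟨h𝔲, gTilde.strictMonoOn_Ioo_zero_one hp₂ h𝔲.le, gTilde.tendsto_nhdsGT_zero hp₂,
    neg_one_lt_zero, gTilde.apply_one_pos hp₂ h𝔲, gTilde.existsUnique_mem_Ioo_eq_zero hp₂ h𝔲⟩
end

section
/- Let p₁ > 1, p₂ > 0 satisfy ((1+p₂)/p₂)·((p₁-1)/p₁) = δ/r with r, δ > 0 and r < m ≤ δ. Then (p₁/m) - (p₁-1)/δ - p₂(1/r - 1/m) = (p₁+p₂)/m - ((p₁-1)/δ)(1 + (1+p₂)/p₁) ≥ (1+p₂)/(p₁δ) > 0. -/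
/-! The ratio identity is equivalent to `p₂ / r = (1 + p₂)(p₁ - 1) / (p₁ δ)`, which turns the left-hand
side into the middle expression. Since `m ≤ δ`, replacing `m` by `δ` can only lower `(p₁ + p₂) / m`,
and at `m = δ` the middle expression collapses to `(1 + p₂) / (p₁ δ)`. -/

lemma div_eq_of_ratio_identity {p₁ p₂ r δ : ℝ} (hp₁ : p₁ ≠ 0) (hp₂ : p₂ ≠ 0) (hδ : δ ≠ 0)
    (hid : (1 + p₂) / p₂ * ((p₁ - 1) / p₁) = δ / r) :
    p₂ / r = (1 + p₂) * (p₁ - 1) / (p₁ * δ) :=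
  calc p₂ / r = p₂ / δ * (δ / r) := by field_simp
    _ = (1 + p₂) * (p₁ - 1) / (p₁ * δ) := by rw [← hid]; field_simp

lemma add_div_sub_div_mul_eq {p₁ p₂ δ : ℝ} (hp₁ : p₁ ≠ 0) :
    (p₁ + p₂) / δ - (p₁ - 1) / δ * (1 + (1 + p₂) / p₁) = (1 + p₂) / (p₁ * δ) := by
  field_simp
  ring

/-- For r < m ≤ δ,
(p₁/m) - (p₁-1)/δ - p₂(1/r - 1/m) = (p₁+p₂)/m - ((p₁-1)/δ)(1 + (1+p₂)/p₁)
≥ (1+p₂)/(p₁δ) > 0. -/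
theorem stmt_10 (p₁ p₂ r δ m : ℝ) (hp₁ : 1 < p₁) (hp₂ : 0 < p₂)
    (hr : 0 < r) (hδ : 0 < δ) (hrm : r < m) (hmδ : m ≤ δ)
    (hid : (1 + p₂) / p₂ * ((p₁ - 1) / p₁) = δ / r) :
    p₁ / m - (p₁ - 1) / δ - p₂ * (1 / r - 1 / m)
      = (p₁ + p₂) / m - (p₁ - 1) / δ * (1 + (1 + p₂) / p₁) ∧
    (1 + p₂) / (p₁ * δ) ≤ (p₁ + p₂) / m - (p₁ - 1) / δ * (1 + (1 + p₂) / p₁) ∧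
    0 < (1 + p₂) / (p₁ * δ) := by
  have hm : 0 < m := hr.trans hrm
  have hp₁_pos : 0 < p₁ := one_pos.trans hp₁
  have hp₂_div_r := div_eq_of_ratio_identity hp₁_pos.ne' hp₂.ne' hδ.ne' hid
  refine ⟨?_, ?_, by positivity⟩
  · rw [mul_sub, mul_one_div, hp₂_div_r]
    field_simp
    ring
  · have hdiv_le : (p₁ + p₂) / δ ≤ (p₁ + p₂) / m :=
      div_le_div_of_nonneg_left (by positivity) hm hmδ
    linarith [add_div_sub_div_mul_eq (p₂ := p₂) (δ := δ) hp₁_pos.ne']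
end

section
/- Let p₁ > 1, p₂ > 0, m > δ > 0, B₀ > 0, α > 0, and h₃ > 1. For h ∈ (1, h₃], if h^{-p₁}(h₃ - h) ≥ (mB₀/(αδ))·((p₁-1)/p₁ - δ/m), then h^{p₁} + (αδ/(mB₀))p₁(h₃ - h) - p₁(1 - δ/m)h ≥ p₁h(1 - δ/m)(h^{p₁-1} - 1) > 0. -/
open Set

/-! Clearing the factor `h^{-p₁}` and the constant `mB₀/(αδ)` turns the hypothesis into
`(p₁(1 - δ/m) - 1) h^{p₁} ≤ (αδ/(mB₀)) p₁ (h₃ - h)`, which after splitting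
`h^{p₁} = h · h^{p₁-1}` is the claimed inequality. Positivity of the right-hand side comes
from `h^{p₁-1} > 1` for `h > 1` and `p₁ > 1`. -/

lemma mul_rpow_le_of_inv_mul_le_rpow_neg_mul {c k x p y : ℝ} (hc : 0 < c) (hx : 0 < x)
    (h : c⁻¹ * k ≤ x ^ (-p) * y) : k * x ^ p ≤ c * y := by
  have hxp : 0 < x ^ p := Real.rpow_pos_of_pos hx p
  rw [Real.rpow_neg hx.le, inv_mul_le_iff₀ hc, ← mul_assoc, ← div_eq_mul_inv, div_mul_eq_mul_div,
    le_div_iff₀ hxp] at h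
  exact h

lemma mul_mul_rpow_sub_one_sub_one_le {s x q e : ℝ} (hx : 0 < x)
    (h : (s - 1) * x ^ q ≤ e) : s * x * (x ^ (q - 1) - 1) ≤ x ^ q + e - s * x := by
  have hsplit : x ^ q = x * x ^ (q - 1) := by
    simpa using Real.rpow_add hx 1 (q - 1)
  rw [hsplit] at h ⊢
  linarith

theorem stmt_15_general (p₁ m δ B₀ α h₃ h : ℝ) (hp₁ : 1 < p₁)
    (hδ : 0 < δ) (hδm : δ < m) (hB₀ : 0 < B₀) (hα : 0 < α)
    (hh : h ∈ Ioc (1 : ℝ) h₃)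
    (hyp : m * B₀ / (α * δ) * ((p₁ - 1) / p₁ - δ / m) ≤ h ^ (-p₁) * (h₃ - h)) :
    p₁ * h * (1 - δ / m) * (h ^ (p₁ - 1) - 1)
      ≤ h ^ p₁ + α * δ / (m * B₀) * p₁ * (h₃ - h) - p₁ * (1 - δ / m) * h ∧
    0 < p₁ * h * (1 - δ / m) * (h ^ (p₁ - 1) - 1) := by
  have hh₁ : 1 < h := hh.1
  have h_pos : 0 < h := one_pos.trans hh₁
  have hm : 0 < m := hδ.trans hδm
  have hc : 0 < α * δ / (m * B₀) := by positivity
  rw [← inv_div] at hyp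
  have cleared := mul_rpow_le_of_inv_mul_le_rpow_neg_mul hc h_pos hyp
  have hcoeff : p₁ * ((p₁ - 1) / p₁ - δ / m) = p₁ * (1 - δ / m) - 1 := by
    field_simp
    ring
  have hδm' : 0 < 1 - δ / m := by rw [sub_pos, div_lt_one hm]; exact hδm
  have hpow : 1 < h ^ (p₁ - 1) := Real.one_lt_rpow hh₁ (by linarith)
  constructor
  · have key : (p₁ * (1 - δ / m) - 1) * h ^ p₁ ≤ α * δ / (m * B₀) * p₁ * (h₃ - h) := by
      rw [← hcoeff]
      linear_combination p₁ * cleared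
    have := mul_mul_rpow_sub_one_sub_one_le h_pos key
    linarith
  · have : 0 < h ^ (p₁ - 1) - 1 := by linarith
    have : 0 < p₁ := by linarith
    positivity

/-- Key inequality in the APRM analysis for m ≥ m*: for h ∈ (1, h₃],
if h^{-p₁}(h₃ - h) ≥ (mB₀/(αδ))((p₁-1)/p₁ - δ/m), then
h^{p₁} + (αδ/(mB₀))p₁(h₃ - h) - p₁(1 - δ/m)h ≥ p₁h(1 - δ/m)(h^{p₁-1} - 1) > 0. -/
theorem stmt_15 (p₁ p₂ m δ B₀ α h₃ h : ℝ) (hp₁ : 1 < p₁) (hp₂ : 0 < p₂)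
    (hδ : 0 < δ) (hδm : δ < m) (hB₀ : 0 < B₀) (hα : 0 < α) (hh₃ : 1 < h₃)
    (hh : h ∈ Ioc (1 : ℝ) h₃)
    (hyp : m * B₀ / (α * δ) * ((p₁ - 1) / p₁ - δ / m) ≤ h ^ (-p₁) * (h₃ - h)) :
    p₁ * h * (1 - δ / m) * (h ^ (p₁ - 1) - 1)
      ≤ h ^ p₁ + α * δ / (m * B₀) * p₁ * (h₃ - h) - p₁ * (1 - δ / m) * h ∧
    0 < p₁ * h * (1 - δ / m) * (h ^ (p₁ - 1) - 1) :=
  stmt_15_general p₁ m δ B₀ α h₃ h hp₁ hδ hδm hB₀ hα hh hyp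
end
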